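/- Let k ≥ 1 and let 𝓔 be a linear operator on the space of k×k complex matrices that is self-adjoint with respect to the Frobenius (Hilbert–Schmidt) inner product ⟨X,Y⟩ = tr(X†Y). Suppose there is a matrix Λ with ‖Λ‖_F = 1 and 𝓔(Λ) = Λ, and a real number 0 ≤ λ < 1 such that ‖𝓔(X)‖_F ≤ λ‖X‖_F for every matrix X with ⟨Λ,X⟩ = 0. Then for all k×k matrices X, Y and every natural number n, |tr(Y† 𝓔ⁿ(X)) − tr(Y†Λ)·tr(Λ†X)| ≤ λⁿ · ‖X‖_F · ‖Y‖_F. -/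

import Mathlib

open scoped Matrix

/-- The Frobenius (Hilbert–Schmidt) norm of a complex matrix, `‖X‖_F = √tr(X†X)`. -/
noncomputable def frobNorm {k : ℕ} (X : Matrix (Fin k) (Fin k) ℂ) : ℝ :=
  Real.sqrt ((Xᴴ * X).trace.re)

/-!
Write `x = ⟪v, x⟫ • v + x'` with `x' ⊥ v`. Since `T` is symmetric and fixes `v`, it maps `v^⊥`
into itself, so the gap bound iterates to `‖Tⁿ x'‖ ≤ λⁿ ‖x'‖`, while `Tⁿ` fixes the component
along `v`. Hence `⟪y, Tⁿ x⟫ - ⟪y, v⟫⟪v, x⟫ = ⟪y, Tⁿ x'⟫`, and Cauchy–Schwarz together with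
`‖x'‖ ≤ ‖x‖` gives the bound. Matrices with the Frobenius inner product are identified
isometrically with `EuclideanSpace ℂ (Fin k × Fin k)`.
-/

open scoped InnerProductSpace

section SpectralGap

variable {𝕜 E : Type*} [RCLike 𝕜] [NormedAddCommGroup E] [InnerProductSpace 𝕜 E]
  {T : Module.End 𝕜 E} {v : E}

lemma LinearMap.IsSymmetric.inner_pow_apply_of_apply_eq (hT : T.IsSymmetric) (hv : T v = v)
    (x : E) (n : ℕ) : ⟪v, (T ^ n) x⟫_𝕜 = ⟪v, x⟫_𝕜 := by
  induction n with
  | zero => rfl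
  | succ n ih => rw [pow_succ', Module.End.mul_apply, ← hT, hv, ih]

lemma norm_pow_apply_le_of_inner_eq_zero (hT : T.IsSymmetric) (hv : T v = v) {lam : ℝ}
    (hlam : 0 ≤ lam) (hgap : ∀ x, ⟪v, x⟫_𝕜 = 0 → ‖T x‖ ≤ lam * ‖x‖)
    {x : E} (hx : ⟪v, x⟫_𝕜 = 0) (n : ℕ) : ‖(T ^ n) x‖ ≤ lam ^ n * ‖x‖ := by
  induction n with
  | zero => simp
  | succ n ih =>
    calc ‖(T ^ (n + 1)) x‖ = ‖T ((T ^ n) x)‖ := by rw [pow_succ', Module.End.mul_apply]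
      _ ≤ lam * ‖(T ^ n) x‖ := hgap _ (by rw [hT.inner_pow_apply_of_apply_eq hv, hx])
      _ ≤ lam * (lam ^ n * ‖x‖) := by gcongr
      _ = lam ^ (n + 1) * ‖x‖ := by ring

lemma inner_sub_inner_smul_self_eq_zero (hv : ‖v‖ = 1) (x : E) :
    ⟪v, x - ⟪v, x⟫_𝕜 • v⟫_𝕜 = 0 := by
  rw [inner_sub_right, inner_smul_right, inner_self_eq_norm_sq_to_K, hv]
  simp

lemma norm_sub_inner_smul_le (hv : ‖v‖ = 1) (x : E) : ‖x - ⟪v, x⟫_𝕜 • v‖ ≤ ‖x‖ := by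
  have h := norm_add_sq_eq_norm_sq_add_norm_sq_of_inner_eq_zero (⟪v, x⟫_𝕜 • v) (x - ⟪v, x⟫_𝕜 • v)
    (by rw [inner_smul_left, inner_sub_inner_smul_self_eq_zero hv, mul_zero])
  rw [add_sub_cancel] at h
  exact (mul_self_le_mul_self_iff (norm_nonneg _) (norm_nonneg x)).2
    (by nlinarith [mul_self_nonneg ‖⟪v, x⟫_𝕜 • v‖])

theorem norm_inner_pow_apply_sub_le (hT : T.IsSymmetric) (hv1 : ‖v‖ = 1) (hv : T v = v)
    {lam : ℝ} (hlam : 0 ≤ lam) (hgap : ∀ x, ⟪v, x⟫_𝕜 = 0 → ‖T x‖ ≤ lam * ‖x‖) (x y : E)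
    (n : ℕ) : ‖⟪y, (T ^ n) x⟫_𝕜 - ⟪y, v⟫_𝕜 * ⟪v, x⟫_𝕜‖ ≤ lam ^ n * ‖x‖ * ‖y‖ := by
  set x' := x - ⟪v, x⟫_𝕜 • v
  have hTx : (T ^ n) x = ⟪v, x⟫_𝕜 • v + (T ^ n) x' := by
    conv_lhs => rw [← add_sub_cancel (⟪v, x⟫_𝕜 • v) x]
    rw [map_add, map_smul, Module.End.pow_apply T n v, Function.iterate_fixed hv]
  have hdiff : ⟪y, (T ^ n) x⟫_𝕜 - ⟪y, v⟫_𝕜 * ⟪v, x⟫_𝕜 = ⟪y, (T ^ n) x'⟫_𝕜 := by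
    rw [hTx, inner_add_right, inner_smul_right]
    ring
  calc ‖⟪y, (T ^ n) x⟫_𝕜 - ⟪y, v⟫_𝕜 * ⟪v, x⟫_𝕜‖ = ‖⟪y, (T ^ n) x'⟫_𝕜‖ := by rw [hdiff]
    _ ≤ ‖y‖ * ‖(T ^ n) x'‖ := norm_inner_le_norm _ _
    _ ≤ ‖y‖ * (lam ^ n * ‖x'‖) := by
      gcongr
      exact norm_pow_apply_le_of_inner_eq_zero hT hv hlam hgap
        (inner_sub_inner_smul_self_eq_zero hv1 x) n
    _ ≤ ‖y‖ * (lam ^ n * ‖x‖) := by gcongr; exact norm_sub_inner_smul_le hv1 x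
    _ = lam ^ n * ‖x‖ * ‖y‖ := by ring

end SpectralGap

namespace Matrix

variable {m n 𝕜 : Type*} [RCLike 𝕜]

noncomputable def frobeniusLinearEquiv : Matrix m n 𝕜 ≃ₗ[𝕜] EuclideanSpace 𝕜 (m × n) :=
  (LinearEquiv.curry 𝕜 𝕜 m n).symm.trans (WithLp.linearEquiv 2 𝕜 (m × n → 𝕜)).symm

@[simp]
lemma frobeniusLinearEquiv_apply (X : Matrix m n 𝕜) (i : m) (j : n) :
    frobeniusLinearEquiv X (i, j) = X i j :=
  rfl

lemma inner_frobeniusLinearEquiv [Fintype m] [Fintype n] (X Y : Matrix m n 𝕜) :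
    ⟪frobeniusLinearEquiv X, frobeniusLinearEquiv Y⟫_𝕜 = (Xᴴ * Y).trace := by
  simp only [PiLp.inner_apply, Fintype.sum_prod_type, frobeniusLinearEquiv_apply,
    RCLike.inner_apply, starRingEnd_apply, trace, diag_apply, mul_apply, conjTranspose_apply]
  rw [Finset.sum_comm]
  simp only [mul_comm]

end Matrix

lemma frobNorm_eq_norm_frobeniusLinearEquiv {k : ℕ} (X : Matrix (Fin k) (Fin k) ℂ) :
    frobNorm X = ‖Matrix.frobeniusLinearEquiv X‖ := by
  rw [norm_eq_sqrt_re_inner (𝕜 := ℂ), Matrix.inner_frobeniusLinearEquiv, frobNorm]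
  rfl

lemma LinearEquiv.conjAlgEquiv_pow_apply_apply {R M N : Type*} [CommSemiring R]
    [AddCommMonoid M] [Module R M] [AddCommMonoid N] [Module R N] (e : M ≃ₗ[R] N)
    (f : Module.End R M) (j : ℕ) (x : M) :
    (e.conjAlgEquiv R f ^ j) (e x) = e ((f ^ j) x) := by
  rw [← map_pow, LinearEquiv.conjAlgEquiv_apply]
  simp

theorem stmt0 {k : ℕ}
    (ℰ : Module.End ℂ (Matrix (Fin k) (Fin k) ℂ))
    (hsa : ∀ X Y : Matrix (Fin k) (Fin k) ℂ,
      (Xᴴ * ℰ Y).trace = ((ℰ X)ᴴ * Y).trace)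
    (Λ : Matrix (Fin k) (Fin k) ℂ) (hΛnorm : frobNorm Λ = 1) (hΛfix : ℰ Λ = Λ)
    (lam : ℝ) (hlam0 : 0 ≤ lam)
    (hgap : ∀ X : Matrix (Fin k) (Fin k) ℂ,
      (Λᴴ * X).trace = 0 → frobNorm (ℰ X) ≤ lam * frobNorm X) :
    ∀ (X Y : Matrix (Fin k) (Fin k) ℂ) (n : ℕ),
      ‖(Yᴴ * ((ℰ ^ n) X)).trace - (Yᴴ * Λ).trace * (Λᴴ * X).trace‖
        ≤ lam ^ n * frobNorm X * frobNorm Y := by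
  intro X Y n
  let e : Matrix (Fin k) (Fin k) ℂ ≃ₗ[ℂ] _ := Matrix.frobeniusLinearEquiv
  have hinner (X Y) : ⟪e X, e Y⟫_ℂ = (Xᴴ * Y).trace := Matrix.inner_frobeniusLinearEquiv X Y
  have hnorm (X) : ‖e X‖ = frobNorm X := (frobNorm_eq_norm_frobeniusLinearEquiv X).symm
  let T := e.conjAlgEquiv ℂ ℰ
  have hT (j X) : (T ^ j) (e X) = e ((ℰ ^ j) X) := e.conjAlgEquiv_pow_apply_apply ℰ j X
  have hT1 (X) : T (e X) = e (ℰ X) := by simpa using hT 1 X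
  have hTsymm : T.IsSymmetric := by
    intro x y
    obtain ⟨X, rfl⟩ := e.surjective x
    obtain ⟨Y, rfl⟩ := e.surjective y
    rw [hT1, hT1, hinner, hinner, hsa]
  have hTgap (x) (hx : ⟪e Λ, x⟫_ℂ = 0) : ‖T x‖ ≤ lam * ‖x‖ := by
    obtain ⟨X, rfl⟩ := e.surjective x
    rw [hT1, hnorm, hnorm]
    exact hgap X (by rwa [hinner] at hx)
  have key := norm_inner_pow_apply_sub_le hTsymm (by rw [hnorm, hΛnorm])
    (by rw [hT1, hΛfix]) hlam0 hTgap (e X) (e Y) n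
  rwa [hT, hinner, hinner, hinner, hnorm, hnorm] at key
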